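/- Let p ∈ [1,2) and let x, y ∈ C_p([a,b],V) be such that, for some choice of basis of V, their coordinate expressions x = (x¹,…,x^d) and y = (y¹,…,y^d) satisfy x¹ = y¹ = ρ : [a,b] → ℝ for a strictly monotone continuous function ρ, and suppose x_a = y_a. Then S(x)_{[a,b]} = S(y)_{[a,b]} if and only if x = y. -/

import Mathlib

noncomputable section

open Filter Topology MeasureTheory

/-- Model of a finite-dimensional real inner product space of dimension `d`. -/
abbrev Vec (d : ℕ) : Type := EuclideanSpace ℝ (Fin d)

/-- The `k`-th tensor power `V^{⊗k}` of `Vec d` with its Hilbert–Schmidt inner product,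
realised in coordinates indexed by words of length `k` over the alphabet `Fin d`. -/
abbrev TLevel (d k : ℕ) : Type := EuclideanSpace ℝ (Fin k → Fin d)

/-- The extended tensor algebra `T((V)) = ∏_{k ≥ 0} V^{⊗k}`. -/
abbrev TSeq (d : ℕ) : Type := ∀ k : ℕ, TLevel d k

/-- Riemann–Stieltjes sum of `∫ f dg` over `[a,b]` along the uniform partition with `n` pieces. -/
def rsSum (f g : ℝ → ℝ) (a b : ℝ) (n : ℕ) : ℝ :=
  ∑ i ∈ Finset.range n,
    f (a + i * (b - a) / n) *
      (g (a + (i + 1) * (b - a) / n) - g (a + i * (b - a) / n))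

/-- The (Young / Riemann–Stieltjes) integral `∫_a^b f dg`, defined as the limit of
Riemann–Stieltjes sums along uniform partitions (junk value if no limit exists). -/
def rsInt (f g : ℝ → ℝ) (a b : ℝ) : ℝ :=
  limUnder atTop (rsSum f g a b)

/-- Iterated (Young) integral coordinate of a path, with the word given in *reverse*
order, so that `sigWord x a (i :: w) t = ∫_a^t (sigWord x a w u) d(x^i_u)`. -/
def sigWord {d : ℕ} (x : ℝ → Vec d) (a : ℝ) : List (Fin d) → ℝ → ℝ
  | [], _ => 1
  | i :: w, t => rsInt (fun u => sigWord x a w u) (fun u => x u i) a t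

/-- The `k`-th signature level `S(x)^{(k)}_{[a,b]} ∈ V^{⊗k}`, in coordinates. -/
def sigLevel {d : ℕ} (x : ℝ → Vec d) (a b : ℝ) (k : ℕ) : TLevel d k :=
  WithLp.toLp 2 (fun idx => sigWord x a (List.ofFn idx).reverse b)

/-- The signature transform `S(x)_{[a,b]} ∈ T((V))`. -/
def signatureT {d : ℕ} (x : ℝ → Vec d) (a b : ℝ) : TSeq d :=
  fun k => sigLevel x a b k

/-- The set of sums `Σ_i ‖x_{t_{i+1}} − x_{t_i}‖^p` over partitions `a = t_0 ≤ … ≤ t_n = b`. -/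
def varSums {E : Type*} [NormedAddCommGroup E] (x : ℝ → E) (p a b : ℝ) : Set ℝ :=
  { s | ∃ (n : ℕ) (t : ℕ → ℝ), Monotone t ∧ t 0 = a ∧ t n = b ∧
      s = ∑ i ∈ Finset.range n, ‖x (t (i + 1)) - x (t i)‖ ^ p }

/-- `x ∈ C_p([a,b], E)` : continuous with finite `p`-variation on `[a,b]`. -/
def MemCp {E : Type*} [NormedAddCommGroup E] (x : ℝ → E) (p a b : ℝ) : Prop :=
  ContinuousOn x (Set.Icc a b) ∧ BddAbove (varSums x p a b)

/-- The `p`-variation norm `‖x‖_{p,[a,b]}`. -/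
def pvar {E : Type*} [NormedAddCommGroup E] (x : ℝ → E) (p a b : ℝ) : ℝ :=
  sSup (varSums x p a b) ^ (1 / p)

/-- The product of the extended tensor algebra `T((V))`:
`(v · w)_k = Σ_{l=0}^{k} v_l ⊗ w_{k-l}`, in coordinates. -/
def seqMul {d : ℕ} (v w : TSeq d) : TSeq d :=
  fun k => WithLp.toLp 2 fun idx =>
    ∑ l : Fin (k + 1),
      v l.1 (fun i => idx ⟨i.1, lt_of_lt_of_le i.2 (Nat.lt_succ_iff.mp l.2)⟩) *
        w (k - l.1) (fun j => idx ⟨l.1 + j.1, by have hj := j.2; omega⟩)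

/-- The unit `1 = (1,0,0,…)` of `T((V))`. -/
def seqOne (d : ℕ) : TSeq d :=
  fun k => if k = 0 then WithLp.toLp 2 (fun _ => (1 : ℝ)) else 0

/-- Truncation (canonical projection) `π_N : T((V)) → T_N(V)`. -/
def truncTS {d : ℕ} (N : ℕ) (v : TSeq d) : TSeq d :=
  fun k => if k ≤ N then v k else 0

/-- Tensor polynomials: elements of `T(V) = ⊕_k V^{⊗k}` inside `T((V))`. -/
def FinSuppTS {d : ℕ} (f : TSeq d) : Prop := ∃ N, ∀ k, N < k → f k = 0

/-- Pairing of a tensor polynomial over the dual with an element of `T((V))`,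
using the canonical (Hilbert–Schmidt) identification `(V^{⊗k})* ≅ (V*)^{⊗k}`. -/
def pairTS {d : ℕ} (f v : TSeq d) : ℝ :=
  ∑' k, @inner ℝ _ _ (f k) (v k)

/-- The shuffle product on `T(V*)`, in coordinates:
`(f ⧢ g)_n(w) = Σ_{A ⊆ {1,…,n}} f_{|A|}(w|_A) · g_{n−|A|}(w|_{Aᶜ})`. -/
def shuffleTS {d : ℕ} (f g : TSeq d) : TSeq d :=
  fun n => WithLp.toLp 2 fun idx =>
    ∑ A : Finset (Fin n),
      f A.card (fun i => idx (A.orderIsoOfFin rfl i).1) *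
        g (n - A.card) (fun j =>
          idx ((Aᶜ).orderIsoOfFin (by simp [Finset.card_compl]) j).1)

/-- Concatenation `x * y` of paths, where `x` lives on `[a,b]` and `y` on `[b,c]`. -/
def concatP {d : ℕ} (x y : ℝ → Vec d) (b : ℝ) : ℝ → Vec d :=
  fun t => if t ≤ b then x t else y t - y b + x b

/-- Signatures over a fixed interval `[a,b]` of paths in `C_p([a,b],V)`. -/
def SigSet (d : ℕ) (p a b : ℝ) : Set (TSeq d) :=
  { s | ∃ x : ℝ → Vec d, MemCp x p a b ∧ s = signatureT x a b }

/-- `S_p`: the image of `C_p(V)` under the signature transform. -/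
def SigSetAll (d : ℕ) (p : ℝ) : Set (TSeq d) :=
  { s | ∃ (a b : ℝ) (x : ℝ → Vec d), a ≤ b ∧ MemCp x p a b ∧ s = signatureT x a b }

/-- The truncated tensor algebra `T_N(V) = ⊕_{k=0}^N V^{⊗k}` as a submodule of `T((V))`. -/
def truncSubmodule (d N : ℕ) : Submodule ℝ (TSeq d) where
  carrier := { v | ∀ k, N < k → v k = 0 }
  add_mem' := fun {u v} hu hv k hk => by
    show u k + v k = 0
    rw [hu k hk, hv k hk, add_zero]
  zero_mem' := fun k _ => rfl
  smul_mem' := fun c {v} hv k hk => by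
    show c • v k = 0
    rw [hv k hk, smul_zero]

/-- Paths in `C_p([a,b],V)` started at the origin. -/
def PathsFrom0 (d : ℕ) (p a b : ℝ) : Type := {x : ℝ → Vec d // MemCp x p a b ∧ x a = 0}

/-- Tree-like equivalence: two paths are equivalent iff their signatures agree. -/
def sigSetoid (d : ℕ) (p a b : ℝ) : Setoid (PathsFrom0 d p a b) where
  r x y := signatureT x.1 a b = signatureT y.1 a b
  iseqv := ⟨fun _ => rfl, Eq.symm, Eq.trans⟩

/-- The space `𝒞_p` of unparameterised paths. -/
def UPath (d : ℕ) (p a b : ℝ) : Type := Quotient (sigSetoid d p a b)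

/-- The signature transform on unparameterised paths. -/
def sigQ (d : ℕ) (p a b : ℝ) : UPath d p a b → TSeq d :=
  Quotient.lift (fun x => signatureT x.1 a b) (fun _ _ h => h)

/-- The product topology `χ_pr` on `𝒞_p`: the topology induced by the signature
transform from the product topology on `T((V)) = ∏_k V^{⊗k}`. -/
def prodTop (d : ℕ) (p a b : ℝ) : TopologicalSpace (UPath d p a b) :=
  TopologicalSpace.induced (sigQ d p a b) inferInstance

/-- The tree-reduced length of an unparameterised path: the infimum of the `1`-variation
over the bounded-variation representatives of the class. -/
def treeLength (d : ℕ) (p a b : ℝ) (q : UPath d p a b) : ℝ :=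
  sInf { L | ∃ x : PathsFrom0 d p a b,
    Quotient.mk (sigSetoid d p a b) x = q ∧ MemCp x.1 1 a b ∧ L = pvar x.1 1 a b }

/-- `B(r)`: unparameterised paths possessing a bounded-variation representative and
whose tree-reduced length is at most `r`. -/
def ballB (d : ℕ) (p a b r : ℝ) : Set (UPath d p a b) :=
  { q | (∃ x : PathsFrom0 d p a b,
      Quotient.mk (sigSetoid d p a b) x = q ∧ MemCp x.1 1 a b) ∧ treeLength d p a b q ≤ r }

/-- The `φ`-inner product `⟨u,v⟩_φ = Σ_k φ(k) ⟨u_k, v_k⟩` on tensor sequences. -/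
def kTS (d : ℕ) (φ : ℕ → ℝ) (u v : TSeq d) : ℝ :=
  ∑' k, φ k * @inner ℝ _ _ (u k) (v k)

/-- The `φ`-signature kernel on unparameterised paths. -/
def kQ (d : ℕ) (p a b : ℝ) (φ : ℕ → ℝ) (q q' : UPath d p a b) : ℝ :=
  kTS d φ (sigQ d p a b q) (sigQ d p a b q')

/-- The two-parameter `φ`-signature kernel `k_φ(x,y)_{s,t}` of two paths. -/
def kPath (d : ℕ) (φ : ℕ → ℝ) (x y : ℝ → Vec d) (a c s t : ℝ) : ℝ :=
  ∑' k, φ k * @inner ℝ _ _ (sigLevel x a s k) (sigLevel y c t k)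

/-- Double Riemann–Stieltjes sum approximating `∫_a^s ∫_c^t F(u,v) ⟨dx_u, dy_v⟩`. -/
def rsSum2 {d : ℕ} (F : ℝ → ℝ → ℝ) (x y : ℝ → Vec d) (a s c t : ℝ) (n : ℕ) : ℝ :=
  ∑ i ∈ Finset.range n, ∑ j ∈ Finset.range n,
    F (a + i * (s - a) / n) (c + j * (t - c) / n) *
      @inner ℝ _ _
        (x (a + (i + 1) * (s - a) / n) - x (a + i * (s - a) / n))
        (y (c + (j + 1) * (t - c) / n) - y (c + j * (t - c) / n))

/-- The element `i₁(v) ∈ T((V))` concentrated in tensor degree one. -/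
def unitVec {d : ℕ} (v : Vec d) : TSeq d :=
  fun k =>
    match k with
    | 1 => WithLp.toLp 2 (fun idx => v (idx 0))
    | _ => 0

/-- `E`-valued Riemann–Stieltjes sums for the controlled integral `∫_a^t Y_u · dx_u`,
where `m : E → V → E` implements right multiplication by degree-one tensors. -/
def rsSumE {d : ℕ} {E : Type*} [NormedAddCommGroup E]
    (m : E → Vec d → E) (Y : ℝ → E) (x : ℝ → Vec d) (a t : ℝ) (n : ℕ) : E :=
  ∑ i ∈ Finset.range n,
    m (Y (a + i * (t - a) / n))
      (x (a + (i + 1) * (t - a) / n) - x (a + i * (t - a) / n))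

/-!
Write the common coordinate as `ρ = ρ a + s e` with `s ≠ 0` and `e` continuous, strictly
increasing, `e a = 0`. The words `i₀ … i₀` have signature `(s e)^k / k!`, so the word
`i₀ … i₀ j` gives `∫ (s e)^k / k! dx^j`, which summation by parts rewrites through the endpoint
values of `x^j` and the Riemann–Stieltjes integral `∫ x^j d(e^k)`; the latter exists because
`e^k` is monotone. Equal signatures therefore force `x_b = y_b` and `∫ (x^j - y^j) d(e^k) = 0`
for every `k`. By Weierstrass approximation the same holds with `e^k` replaced by `Φ ∘ e` for
any `C¹` function `Φ`, and a smooth step `Φ` localises this to a small window, so the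
continuous function `x^j - y^j` vanishes.
-/

section RiemannStieltjes

open Finset

variable {a b : ℝ}

def gridPt (a b : ℝ) (n i : ℕ) : ℝ := a + i * (b - a) / n

def rsSumRight (F G : ℝ → ℝ) (a b : ℝ) (n : ℕ) : ℝ :=
  ∑ i ∈ range n, F (gridPt a b n (i + 1)) * (G (gridPt a b n (i + 1)) - G (gridPt a b n i))

@[simp] lemma gridPt_zero (a b : ℝ) (n : ℕ) : gridPt a b n 0 = a := by simp [gridPt]

lemma gridPt_self (a b : ℝ) {n : ℕ} (hn : n ≠ 0) : gridPt a b n n = b := by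
  have : (n : ℝ) ≠ 0 := Nat.cast_ne_zero.mpr hn
  simp only [gridPt]; field_simp; ring

lemma gridPt_succ_sub (a b : ℝ) (n i : ℕ) :
    gridPt a b n (i + 1) - gridPt a b n i = (b - a) / n := by
  simp only [gridPt]; push_cast; ring

lemma gridPt_mul_mul (a b : ℝ) {n m : ℕ} (hn : n ≠ 0) (hm : m ≠ 0) (i : ℕ) :
    gridPt a b (n * m) (i * m) = gridPt a b n i := by
  have : (m : ℝ) ≠ 0 := Nat.cast_ne_zero.mpr hm
  simp only [gridPt]; push_cast; field_simp

lemma gridPt_mono (hab : a ≤ b) (n : ℕ) : Monotone (gridPt a b n) := fun i j hij => by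
  have : (i : ℝ) ≤ j := Nat.cast_le.mpr hij
  unfold gridPt; gcongr

lemma gridPt_mem (hab : a ≤ b) {n i : ℕ} (hn : n ≠ 0) (hi : i ≤ n) :
    gridPt a b n i ∈ Set.Icc a b :=
  ⟨by simpa using gridPt_mono hab n (Nat.zero_le i),
    by simpa [gridPt_self a b hn] using gridPt_mono hab n hi⟩

lemma sum_range_sub_gridPt (G : ℝ → ℝ) (a b : ℝ) {n : ℕ} (hn : n ≠ 0) :
    ∑ i ∈ range n, (G (gridPt a b n (i + 1)) - G (gridPt a b n i)) = G b - G a := by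
  rw [sum_range_sub (fun i => G (gridPt a b n i)), gridPt_self a b hn, gridPt_zero]

lemma abs_sum_le_of_abs_le_sub_gridPt {n : ℕ} (hn : n ≠ 0) {f : ℕ → ℝ} {C : ℝ} {E : ℝ → ℝ}
    (hf : ∀ i < n, |f i| ≤ C * (E (gridPt a b n (i + 1)) - E (gridPt a b n i))) :
    |∑ i ∈ range n, f i| ≤ C * (E b - E a) :=
  calc |∑ i ∈ range n, f i| ≤ ∑ i ∈ range n, |f i| := abs_sum_le_sum_abs _ _
    _ ≤ ∑ i ∈ range n, C * (E (gridPt a b n (i + 1)) - E (gridPt a b n i)) :=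
      sum_le_sum fun i hi => hf i (mem_range.mp hi)
    _ = C * (E b - E a) := by rw [← mul_sum, sum_range_sub_gridPt E a b hn]

lemma eventually_div_natCast_lt (c : ℝ) {δ : ℝ} (hδ : 0 < δ) :
    ∀ᶠ n : ℕ in atTop, c / n < δ :=
  (tendsto_const_div_atTop_nhds_zero_nat c).eventually (gt_mem_nhds hδ)

lemma rsSumRight_sub_left (F₁ F₂ G : ℝ → ℝ) (a b : ℝ) (n : ℕ) :
    rsSumRight (fun t => F₁ t - F₂ t) G a b n = rsSumRight F₁ G a b n - rsSumRight F₂ G a b n := by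
  simp only [rsSumRight, ← sum_sub_distrib, sub_mul]

lemma rsSumRight_neg_left (F G : ℝ → ℝ) (a b : ℝ) (n : ℕ) :
    rsSumRight (-F) G a b n = -rsSumRight F G a b n := by
  simp only [rsSumRight, Pi.neg_apply, ← sum_neg_distrib, neg_mul]

lemma rsSumRight_add_right (F G₁ G₂ : ℝ → ℝ) (a b : ℝ) (n : ℕ) :
    rsSumRight F (fun t => G₁ t + G₂ t) a b n = rsSumRight F G₁ a b n + rsSumRight F G₂ a b n := by
  simp only [rsSumRight, ← sum_add_distrib]
  exact sum_congr rfl fun i _ => by ring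

lemma rsSumRight_const_mul_right (F G : ℝ → ℝ) (c a b : ℝ) (n : ℕ) :
    rsSumRight F (fun t => c * G t) a b n = c * rsSumRight F G a b n := by
  simp only [rsSumRight, mul_sum]
  exact sum_congr rfl fun i _ => by ring

lemma abs_rsSumRight_le (hab : a ≤ b) {F G E : ℝ → ℝ} {C : ℝ}
    (hF : ∀ t ∈ Set.Icc a b, |F t| ≤ C)
    (hG : ∀ s ∈ Set.Icc a b, ∀ t ∈ Set.Icc a b, s ≤ t → |G t - G s| ≤ E t - E s) (n : ℕ) :
    |rsSumRight F G a b n| ≤ C * (E b - E a) := by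
  have ha := Set.left_mem_Icc.mpr hab
  have hb := Set.right_mem_Icc.mpr hab
  rcases eq_or_ne n 0 with rfl | hn
  · simpa [rsSumRight] using
      mul_nonneg ((abs_nonneg _).trans (hF a ha)) ((abs_nonneg _).trans (hG a ha b hb hab))
  refine abs_sum_le_of_abs_le_sub_gridPt hn fun i hi => ?_
  have hi₀ := gridPt_mem hab hn (Nat.le_of_lt hi)
  have hi₁ := gridPt_mem hab hn (Nat.succ_le_of_lt hi)
  rw [abs_mul]
  exact mul_le_mul (hF _ hi₁) (hG _ hi₀ _ hi₁ (gridPt_mono hab n (Nat.le_succ i)))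
    (abs_nonneg _) ((abs_nonneg _).trans (hF _ hi₁))

lemma sum_range_mul_eq_sum_sum {M : Type*} [AddCommMonoid M] (f : ℕ → M) (n m : ℕ) :
    ∑ j ∈ range (n * m), f j = ∑ i ∈ range n, ∑ l ∈ range m, f (i * m + l) := by
  induction n with
  | zero => simp
  | succ n ih => rw [Nat.succ_mul, sum_range_add, ih, sum_range_succ]

lemma rsSumRight_eq_sum_refine (F G : ℝ → ℝ) (a b : ℝ) {n m : ℕ} (hn : n ≠ 0) (hm : m ≠ 0) :
    rsSumRight F G a b n = ∑ j ∈ range (n * m), F (gridPt a b n (j / m + 1)) *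
      (G (gridPt a b (n * m) (j + 1)) - G (gridPt a b (n * m) j)) := by
  rw [sum_range_mul_eq_sum_sum, rsSumRight]
  refine sum_congr rfl fun i _ => ?_
  have hdiv : ∀ l ∈ range m, (i * m + l) / m = i := fun l hl => by
    rw [Nat.add_comm, Nat.add_mul_div_right _ _ (Nat.pos_of_ne_zero hm),
      Nat.div_eq_of_lt (mem_range.mp hl), zero_add]
  rw [sum_congr rfl fun l hl => by rw [hdiv l hl], ← mul_sum,
    ← gridPt_mul_mul a b hn hm (i + 1), ← gridPt_mul_mul a b hn hm i, Nat.succ_mul]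
  exact congrArg _ (sum_range_sub (fun l => G (gridPt a b (n * m) (i * m + l))) m).symm

lemma abs_rsSumRight_sub_rsSumRight_mul_le (hab : a ≤ b) {F G : ℝ → ℝ} {ε : ℝ}
    (hG : MonotoneOn G (Set.Icc a b)) {n m : ℕ} (hn : n ≠ 0) (hm : m ≠ 0)
    (hF : ∀ s ∈ Set.Icc a b, ∀ t ∈ Set.Icc a b, |s - t| ≤ (b - a) / n → |F s - F t| ≤ ε) :
    |rsSumRight F G a b n - rsSumRight F G a b (n * m)| ≤ ε * (G b - G a) := by
  have hnm : n * m ≠ 0 := mul_ne_zero hn hm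
  rw [rsSumRight_eq_sum_refine F G a b hn hm, rsSumRight, ← sum_sub_distrib]
  refine abs_sum_le_of_abs_le_sub_gridPt hnm fun j hj => ?_
  have hq : j / m < n := Nat.div_lt_of_lt_mul (by rwa [mul_comm])
  have hlo : gridPt a b n (j / m) ≤ gridPt a b (n * m) (j + 1) := by
    rw [← gridPt_mul_mul a b hn hm]
    exact gridPt_mono hab _ ((Nat.div_mul_le_self j m).trans (Nat.le_succ j))
  have hhi : gridPt a b (n * m) (j + 1) ≤ gridPt a b n (j / m + 1) := by
    rw [← gridPt_mul_mul a b hn hm, Nat.succ_mul]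
    exact gridPt_mono hab _ (Nat.lt_div_mul_add (Nat.pos_of_ne_zero hm))
  have hcell := gridPt_succ_sub a b n (j / m)
  have hj₀ := gridPt_mem hab hnm hj.le
  have hj₁ := gridPt_mem hab hnm hj
  have hΔ : 0 ≤ G (gridPt a b (n * m) (j + 1)) - G (gridPt a b (n * m) j) :=
    sub_nonneg.mpr (hG hj₀ hj₁ (gridPt_mono hab _ (Nat.le_succ j)))
  rw [← sub_mul, abs_mul, abs_of_nonneg hΔ]
  refine mul_le_mul_of_nonneg_right (hF _ (gridPt_mem hab hn hq) _ hj₁ ?_) hΔ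
  rw [abs_of_nonneg (by linarith)]
  linarith

lemma exists_tendsto_rsSumRight (hab : a ≤ b) {F G : ℝ → ℝ}
    (hF : ContinuousOn F (Set.Icc a b)) (hG : MonotoneOn G (Set.Icc a b)) :
    ∃ J, Tendsto (rsSumRight F G a b) atTop (𝓝 J) := by
  refine cauchySeq_tendsto_of_complete (Metric.cauchySeq_iff'.mpr fun ε hε => ?_)
  set V := G b - G a
  have hV : 0 ≤ V :=
    sub_nonneg.mpr (hG (Set.left_mem_Icc.mpr hab) (Set.right_mem_Icc.mpr hab) hab)
  set ε' := ε / (2 * (V + 1))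
  obtain ⟨δ, hδ, hFδ⟩ := Metric.uniformContinuousOn_iff.mp
    (isCompact_Icc.uniformContinuousOn_of_continuous hF) ε' (by positivity)
  obtain ⟨N, hN⟩ := eventually_atTop.mp
    ((eventually_div_natCast_lt (b - a) hδ).and (eventually_ne_atTop 0))
  have hosc : ∀ n ≥ N, ∀ s ∈ Set.Icc a b, ∀ t ∈ Set.Icc a b,
      |s - t| ≤ (b - a) / n → |F s - F t| ≤ ε' := fun n hn s hs t ht hst =>
    (hFδ s hs t ht (by rw [Real.dist_eq]; exact hst.trans_lt (hN n hn).1)).le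
  refine ⟨N, fun n hn => ?_⟩
  have h₁ := abs_rsSumRight_sub_rsSumRight_mul_le hab hG (hN n hn).2 (hN N le_rfl).2 (hosc n hn)
  have h₂ := abs_rsSumRight_sub_rsSumRight_mul_le hab hG (hN N le_rfl).2 (hN n hn).2
    (hosc N le_rfl)
  rw [mul_comm N n] at h₂
  have hε' : ε' * V + ε' * V < ε := by
    have : ε' * (2 * (V + 1)) = ε := div_mul_cancel₀ ε (by positivity)
    nlinarith
  rw [Real.dist_eq, abs_sub_comm]
  calc _ ≤ |rsSumRight F G a b N - rsSumRight F G a b (n * N)|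
        + |rsSumRight F G a b (n * N) - rsSumRight F G a b n| := abs_sub_le _ _ _
    _ < ε := by rw [abs_sub_comm _ (rsSumRight F G a b n)]; linarith

/-- Only cells on which `G` increases contribute, and these end inside `[t₁, t₂]`. -/
lemma le_rsSumRight_of_flat (hab : a ≤ b) {F G : ℝ → ℝ} {c t₁ τ t₂ : ℝ}
    (hG : MonotoneOn G (Set.Icc a b)) (hG₁ : ∀ t ∈ Set.Icc a b, t ≤ t₁ → G t = G a)
    (hG₂ : ∀ t ∈ Set.Icc a b, τ ≤ t → G t = G b) (hF : ∀ t ∈ Set.Icc t₁ t₂, c ≤ F t)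
    {n : ℕ} (hn : n ≠ 0) (hmesh : (b - a) / n ≤ t₂ - τ) :
    c * (G b - G a) ≤ rsSumRight F G a b n := by
  rw [← sum_range_sub_gridPt G a b hn, mul_sum]
  refine sum_le_sum fun i hi => ?_
  have hi₀ := gridPt_mem hab hn (mem_range.mp hi).le
  have hi₁ := gridPt_mem hab hn (mem_range.mp hi)
  have hle := gridPt_mono hab n (Nat.le_succ i)
  have hΔ := sub_nonneg.mpr (hG hi₀ hi₁ hle)
  rcases hΔ.eq_or_lt with hΔ₀ | hΔ₀
  · rw [← hΔ₀, mul_zero, mul_zero]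
  refine mul_le_mul_of_nonneg_right (hF _ ⟨?_, ?_⟩) hΔ
  · by_contra! h
    rw [hG₁ _ hi₁ h.le, hG₁ _ hi₀ (hle.trans h.le), sub_self] at hΔ₀
    exact hΔ₀.false
  · have : gridPt a b n i < τ := by
      by_contra! h
      rw [hG₂ _ hi₀ h, hG₂ _ hi₁ (h.trans hle), sub_self] at hΔ₀
      exact hΔ₀.false
    linarith [gridPt_succ_sub a b n i]

lemma tendsto_rsSumRight_polynomial_comp {h e : ℝ → ℝ}
    (hpow : ∀ k : ℕ, Tendsto (rsSumRight h (fun t => e t ^ k) a b) atTop (𝓝 0))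
    (P : Polynomial ℝ) :
    Tendsto (rsSumRight h (fun t => P.eval (e t)) a b) atTop (𝓝 0) := by
  induction P using Polynomial.induction_on' with
  | add P Q hP hQ =>
    simpa using (hP.add hQ).congr fun n => (rsSumRight_add_right h _ _ a b n).symm
  | monomial k c =>
    simpa using ((hpow k).const_mul c).congr fun n => (rsSumRight_const_mul_right h _ c a b n).symm

lemma polynomial_derivative_surjective {K : Type*} [Field K] [CharZero K] :
    Function.Surjective (Polynomial.derivative : Polynomial K → Polynomial K) := by
  intro p
  induction p using Polynomial.induction_on' with
  | add p q hp hq =>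
    obtain ⟨P, rfl⟩ := hp
    obtain ⟨Q, rfl⟩ := hq
    exact ⟨P + Q, Polynomial.derivative_add⟩
  | monomial k c =>
    refine ⟨Polynomial.monomial (k + 1) (c / (k + 1)), ?_⟩
    rw [Polynomial.derivative_monomial]
    congr 1
    push_cast
    field_simp

lemma abs_sub_sub_le_of_abs_deriv_sub_le {f g : ℝ → ℝ} {m M η u v : ℝ}
    (hf : Differentiable ℝ f) (hg : Differentiable ℝ g)
    (hfg : ∀ w ∈ Set.Icc m M, |deriv f w - deriv g w| ≤ η)
    (hu : u ∈ Set.Icc m M) (hv : v ∈ Set.Icc m M) (huv : u ≤ v) :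
    |(f v - g v) - (f u - g u)| ≤ η * (v - u) := by
  have := Convex.norm_image_sub_le_of_norm_deriv_le (f := f - g) (C := η)
    (fun w _ => (hf w).sub (hg w)) (fun w hw => by rw [deriv_sub (hf w) (hg w)]; exact hfg w hw)
    (convex_Icc m M) hu hv
  rwa [Real.norm_eq_abs, Real.norm_eq_abs, abs_of_nonneg (sub_nonneg.mpr huv)] at this

/-- Approximate `Φ'` uniformly by a polynomial `P'`: the sums for `P ∘ e` tend to `0`, and
`Φ - P` has a small Lipschitz constant. -/
lemma tendsto_rsSumRight_comp_of_contDiff (hab : a ≤ b) {h e Φ : ℝ → ℝ}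
    (hh : ContinuousOn h (Set.Icc a b)) (he : MonotoneOn e (Set.Icc a b))
    (hpow : ∀ k : ℕ, Tendsto (rsSumRight h (fun t => e t ^ k) a b) atTop (𝓝 0))
    (hΦ : ContDiff ℝ 1 Φ) :
    Tendsto (rsSumRight h (fun t => Φ (e t)) a b) atTop (𝓝 0) := by
  obtain ⟨C, hC⟩ := isCompact_Icc.exists_bound_of_continuousOn hh
  have hC₀ : 0 ≤ C := (norm_nonneg _).trans (hC a (Set.left_mem_Icc.mpr hab))
  have hV : 0 ≤ e b - e a :=
    sub_nonneg.mpr (he (Set.left_mem_Icc.mpr hab) (Set.right_mem_Icc.mpr hab) hab)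
  rw [contDiff_one_iff_deriv] at hΦ
  rw [Metric.tendsto_atTop]
  intro ε hε
  set η := ε / (2 * (C * (e b - e a) + 1))
  obtain ⟨p, hp⟩ := exists_polynomial_near_of_continuousOn (e a) (e b) (deriv Φ)
    hΦ.2.continuousOn η (by positivity)
  obtain ⟨P, rfl⟩ := polynomial_derivative_surjective p
  have hrem : ∀ s ∈ Set.Icc a b, ∀ t ∈ Set.Icc a b, s ≤ t →
      |(Φ (e t) - P.eval (e t)) - (Φ (e s) - P.eval (e s))| ≤ η * e t - η * e s :=
    fun s hs t ht hst => by
      rw [← mul_sub]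
      refine abs_sub_sub_le_of_abs_deriv_sub_le hΦ.1 (Polynomial.differentiable P)
        (fun w hw => ?_) (he.mapsTo_Icc hs) (he.mapsTo_Icc ht) (he hs ht hst)
      rw [Polynomial.deriv, abs_sub_comm]
      exact (hp w hw).le
  obtain ⟨N, hN⟩ := Metric.tendsto_atTop.mp
    (tendsto_rsSumRight_polynomial_comp hpow P) (ε / 2) (half_pos hε)
  refine ⟨N, fun n hn => ?_⟩
  have hsplit : rsSumRight h (fun t => Φ (e t)) a b n = rsSumRight h (fun t => P.eval (e t)) a b n
      + rsSumRight h (fun t => Φ (e t) - P.eval (e t)) a b n := by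
    rw [← rsSumRight_add_right]; simp
  have hremsum := abs_rsSumRight_le hab (fun t ht => hC t ht) hrem n
  have hηV : C * (η * e b - η * e a) < ε / 2 := by
    have h₁ : η * (2 * (C * (e b - e a) + 1)) = ε := div_mul_cancel₀ ε (by positivity)
    have h₂ : 0 < η := by positivity
    linarith [show C * (η * e b - η * e a) = η * (C * (e b - e a)) by ring]
  have hpol := hN n hn
  rw [Real.dist_eq, sub_zero] at hpol ⊢
  rw [hsplit]
  linarith [abs_add_le (rsSumRight h (fun t => P.eval (e t)) a b n)
    (rsSumRight h (fun t => Φ (e t) - P.eval (e t)) a b n)]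

lemma exists_Icc_forall_le_of_continuousWithinAt (hab : a < b) {h : ℝ → ℝ} {t₀ c : ℝ}
    (ht₀ : t₀ ∈ Set.Icc a b) (hh : ContinuousWithinAt h (Set.Icc a b) t₀) (hc : c < h t₀) :
    ∃ t₁ t₂, a ≤ t₁ ∧ t₁ < t₂ ∧ t₂ ≤ b ∧ ∀ t ∈ Set.Icc t₁ t₂, c ≤ h t := by
  obtain ⟨δ, hδ, hδh⟩ := Metric.continuousWithinAt_iff.mp hh (h t₀ - c) (sub_pos.mpr hc)
  refine ⟨max a (t₀ - δ / 2), min b (t₀ + δ / 2), le_max_left _ _, ?_, min_le_left _ _,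
    fun t ht => ?_⟩
  · exact max_lt (lt_min hab (by linarith [ht₀.1])) (lt_min (by linarith [ht₀.2]) (by linarith))
  have htI : t ∈ Set.Icc a b :=
    ⟨(le_max_left _ _).trans ht.1, ht.2.trans (min_le_left _ _)⟩
  have hdist : dist t t₀ < δ := by
    rw [Real.dist_eq, abs_lt]
    constructor <;> linarith [le_max_right a (t₀ - δ / 2), min_le_right b (t₀ + δ / 2), ht.1, ht.2]
  have := hδh htI hdist
  rw [Real.dist_eq, abs_lt] at this
  linarith [this.1]

/-- A smooth step in the variable `e` sees only the values of `h` on a small window where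
`h > 0`, so its Riemann–Stieltjes sums stay bounded away from `0`. -/
lemma nonpos_of_tendsto_rsSumRight_pow (hab : a < b) {h e : ℝ → ℝ}
    (hh : ContinuousOn h (Set.Icc a b)) (he : StrictMonoOn e (Set.Icc a b))
    (hpow : ∀ k : ℕ, Tendsto (rsSumRight h (fun t => e t ^ k) a b) atTop (𝓝 0)) :
    ∀ t ∈ Set.Icc a b, h t ≤ 0 := by
  intro t₀ ht₀
  by_contra! hpos
  obtain ⟨t₁, t₂, ht₁, ht₁₂, ht₂, hwin⟩ :=
    exists_Icc_forall_le_of_continuousWithinAt hab ht₀ (hh t₀ ht₀) (half_lt_self hpos)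
  obtain ⟨τ, ht₁τ, hτt₂⟩ := exists_between ht₁₂
  have ht₁I : t₁ ∈ Set.Icc a b := ⟨ht₁, by linarith⟩
  have hτI : τ ∈ Set.Icc a b := ⟨by linarith, by linarith⟩
  have hgap : 0 < e τ - e t₁ := sub_pos.mpr (he ht₁I hτI (by linarith))
  set Φ := fun w => Real.smoothTransition ((w - e t₁) / (e τ - e t₁))
  have hΦ₀ : ∀ t ∈ Set.Icc a b, t ≤ t₁ → Φ (e t) = 0 := fun t ht htt₁ =>
    Real.smoothTransition.zero_of_nonpos (div_nonpos_of_nonpos_of_nonneg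
      (sub_nonpos.mpr (he.monotoneOn ht ht₁I htt₁)) hgap.le)
  have hΦ₁ : ∀ t ∈ Set.Icc a b, τ ≤ t → Φ (e t) = 1 := fun t ht hτt =>
    Real.smoothTransition.one_of_one_le ((one_le_div hgap).mpr
      (sub_le_sub_right (he.monotoneOn hτI ht hτt) _))
  have ha := Set.left_mem_Icc.mpr hab.le
  have hb := Set.right_mem_Icc.mpr hab.le
  have hlow : ∀ᶠ n in atTop, h t₀ / 2 * (Φ (e b) - Φ (e a)) ≤
      rsSumRight h (fun t => Φ (e t)) a b n := by
    filter_upwards [eventually_div_natCast_lt (b - a) (show 0 < t₂ - τ by linarith),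
      eventually_ne_atTop 0] with n hmesh hn
    refine le_rsSumRight_of_flat (G := fun t => Φ (e t)) hab.le ?_ (fun t ht htt₁ => ?_)
      (fun t ht hτt => ?_) hwin hn hmesh.le
    · exact fun s hs t ht hst => Real.smoothTransition.monotone
        (div_le_div_of_nonneg_right (sub_le_sub_right (he.monotoneOn hs ht hst) _) hgap.le)
    · rw [hΦ₀ t ht htt₁, hΦ₀ a ha ht₁]
    · rw [hΦ₁ t ht hτt, hΦ₁ b hb hτI.2]
  have hlim := ge_of_tendsto (tendsto_rsSumRight_comp_of_contDiff hab.le hh he.monotoneOn hpow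
    (Real.smoothTransition.contDiff.comp ((contDiff_id.sub contDiff_const).div_const _))) hlow
  rw [hΦ₁ b hb hτI.2, hΦ₀ a ha ht₁] at hlim
  linarith

lemma eqOn_zero_of_tendsto_rsSumRight_pow (hab : a < b) {h e : ℝ → ℝ}
    (hh : ContinuousOn h (Set.Icc a b)) (he : StrictMonoOn e (Set.Icc a b))
    (hpow : ∀ k : ℕ, Tendsto (rsSumRight h (fun t => e t ^ k) a b) atTop (𝓝 0)) :
    Set.EqOn h 0 (Set.Icc a b) := fun t ht =>
  le_antisymm (nonpos_of_tendsto_rsSumRight_pow hab hh he hpow t ht) <| neg_nonpos.mp <|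
    nonpos_of_tendsto_rsSumRight_pow hab hh.neg he (fun k => by
      simpa using ((hpow k).neg).congr fun n => (rsSumRight_neg_left h _ a b n).symm) t ht

lemma rsSum_eq_sum_gridPt (f g : ℝ → ℝ) (a b : ℝ) (n : ℕ) :
    rsSum f g a b n =
      ∑ i ∈ range n, f (gridPt a b n i) * (g (gridPt a b n (i + 1)) - g (gridPt a b n i)) := by
  simp [rsSum, gridPt]

lemma rsSum_congr (hab : a ≤ b) {f f' g g' : ℝ → ℝ} (hf : Set.EqOn f f' (Set.Icc a b))
    (hg : Set.EqOn g g' (Set.Icc a b)) (n : ℕ) : rsSum f g a b n = rsSum f' g' a b n := by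
  rcases eq_or_ne n 0 with rfl | hn
  · simp [rsSum]
  simp only [rsSum_eq_sum_gridPt]
  refine sum_congr rfl fun i hi => ?_
  have hi₀ := gridPt_mem hab hn (mem_range.mp hi).le
  have hi₁ := gridPt_mem hab hn (mem_range.mp hi)
  rw [hf hi₀, hg hi₀, hg hi₁]

lemma rsSum_eq_sub_rsSumRight (F X : ℝ → ℝ) (a b : ℝ) {n : ℕ} (hn : n ≠ 0) :
    rsSum F X a b n = F b * X b - F a * X a - rsSumRight X F a b n := by
  rw [← sum_range_sub_gridPt (fun t => F t * X t) a b hn, rsSum_eq_sum_gridPt, rsSumRight,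
    eq_sub_iff_add_eq, ← sum_add_distrib]
  exact sum_congr rfl fun i _ => by ring

lemma abs_mul_sub_integral_le {φ : ℝ → ℝ} {u v ε : ℝ} (huv : u ≤ v)
    (hφ : IntervalIntegrable φ volume u v) (hε : ∀ w ∈ Set.Ioc u v, |φ u - φ w| ≤ ε) :
    |φ u * (v - u) - ∫ w in u..v, φ w| ≤ ε * (v - u) := by
  rw [mul_comm (φ u), ← smul_eq_mul, ← intervalIntegral.integral_const,
    ← intervalIntegral.integral_sub intervalIntegrable_const hφ]
  refine (intervalIntegral.norm_integral_le_of_norm_le_const (C := ε) (f := fun w => φ u - φ w)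
    fun w hw => ?_).trans_eq (by rw [abs_of_nonneg (sub_nonneg.mpr huv)])
  rw [Set.uIoc_of_le huv] at hw
  exact hε w hw

lemma tendsto_rsSum_comp_self (hab : a ≤ b) {e φ : ℝ → ℝ} (he : MonotoneOn e (Set.Icc a b))
    (hec : ContinuousOn e (Set.Icc a b)) (hφ : ContinuousOn φ (Set.Icc (e a) (e b))) :
    Tendsto (rsSum (fun t => φ (e t)) e a b) atTop (𝓝 (∫ w in e a..e b, φ w)) := by
  rw [Metric.tendsto_atTop]
  intro ε hε
  have hV : 0 ≤ e b - e a :=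
    sub_nonneg.mpr (he (Set.left_mem_Icc.mpr hab) (Set.right_mem_Icc.mpr hab) hab)
  set ε' := ε / (e b - e a + 1)
  obtain ⟨δφ, hδφ, hφδ⟩ := Metric.uniformContinuousOn_iff.mp
    (isCompact_Icc.uniformContinuousOn_of_continuous hφ) ε' (by positivity)
  obtain ⟨δ, hδ, heδ⟩ := Metric.uniformContinuousOn_iff.mp
    (isCompact_Icc.uniformContinuousOn_of_continuous hec) δφ hδφ
  obtain ⟨N, hN⟩ := eventually_atTop.mp
    ((eventually_div_natCast_lt (b - a) hδ).and (eventually_ne_atTop 0))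
  refine ⟨N, fun n hn => ?_⟩
  obtain ⟨hmesh, hn⟩ := hN n hn
  have hcell : ∀ i < n, e (gridPt a b n i) ≤ e (gridPt a b n (i + 1)) ∧
      Set.Icc (e (gridPt a b n i)) (e (gridPt a b n (i + 1))) ⊆ Set.Icc (e a) (e b) ∧
      e (gridPt a b n (i + 1)) - e (gridPt a b n i) < δφ := by
    intro i hi
    have hi₀ := gridPt_mem hab hn hi.le
    have hi₁ := gridPt_mem hab hn hi
    have hle := he hi₀ hi₁ (gridPt_mono hab n (Nat.le_succ i))
    refine ⟨hle, Set.Icc_subset_Icc (he.mapsTo_Icc hi₀).1 (he.mapsTo_Icc hi₁).2, ?_⟩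
    have := heδ _ hi₁ _ hi₀ (by
      rw [Real.dist_eq, gridPt_succ_sub, abs_of_nonneg (by positivity)]; exact hmesh)
    rwa [Real.dist_eq, abs_of_nonneg (sub_nonneg.mpr hle)] at this
  have hint : ∀ i < n,
      IntervalIntegrable φ volume (e (gridPt a b n i)) (e (gridPt a b n (i + 1))) := fun i hi =>
    (hφ.mono (by rw [Set.uIcc_of_le (hcell i hi).1]; exact (hcell i hi).2.1)).intervalIntegrable
  have hsplit := intervalIntegral.sum_integral_adjacent_intervals hint
  rw [gridPt_zero, gridPt_self a b hn] at hsplit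
  rw [← hsplit, Real.dist_eq, rsSum_eq_sum_gridPt, ← sum_sub_distrib]
  refine (abs_sum_le_of_abs_le_sub_gridPt (a := a) (b := b) (C := ε') (E := e) hn
    fun i hi => ?_).trans_lt ?_
  · obtain ⟨hle, hsub, hsmall⟩ := hcell i hi
    refine abs_mul_sub_integral_le hle (hint i hi) fun w hw => ?_
    have := hφδ _ (hsub ⟨le_rfl, hle⟩) _ (hsub (Set.Ioc_subset_Icc_self hw))
      (by rw [Real.dist_eq, abs_of_nonpos (by linarith [hw.1])]; linarith [hw.2])
    rw [Real.dist_eq] at this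
    exact this.le
  · have : ε' * (e b - e a + 1) = ε := div_mul_cancel₀ ε (by positivity)
    nlinarith

end RiemannStieltjes

section Signature

open Finset

variable {d : ℕ} {a b : ℝ}

lemma sigWord_congr {x y : ℝ → Vec d} (hxy : Set.EqOn x y (Set.Icc a b)) (w : List (Fin d)) :
    ∀ t ∈ Set.Icc a b, sigWord x a w t = sigWord y a w t := by
  induction w with
  | nil => exact fun _ _ => rfl
  | cons i w ih =>
    intro t ht
    have hsub : Set.Icc a t ⊆ Set.Icc a b := Set.Icc_subset_Icc_right ht.2
    simp only [sigWord, rsInt]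
    congr 1
    funext n
    exact rsSum_congr ht.1 (fun u hu => ih u (hsub hu)) (fun u hu => by rw [hxy (hsub hu)]) n

lemma signatureT_eq_of_eqOn (hab : a ≤ b) {x y : ℝ → Vec d} (hxy : Set.EqOn x y (Set.Icc a b)) :
    signatureT x a b = signatureT y a b := by
  funext k
  ext idx
  exact sigWord_congr hxy _ b (Set.right_mem_Icc.mpr hab)

lemma sigWord_eq_of_signatureT_eq {x y : ℝ → Vec d} (hsig : signatureT x a b = signatureT y a b)
    (w : List (Fin d)) : sigWord x a w b = sigWord y a w b := by
  simpa only [signatureT, sigLevel, PiLp.toLp_apply, List.ofFn_get, List.reverse_reverse] using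
    congrArg (fun v => v w.reverse.get) (congrFun hsig w.reverse.length)

lemma sigWord_replicate {x : ℝ → Vec d} {i₀ : Fin d} {e : ℝ → ℝ} {c s : ℝ}
    (he : MonotoneOn e (Set.Icc a b)) (hec : ContinuousOn e (Set.Icc a b)) (he₀ : e a = 0)
    (hx : ∀ u ∈ Set.Icc a b, x u i₀ = c + s * e u) (k : ℕ) :
    ∀ t ∈ Set.Icc a b, sigWord x a (List.replicate k i₀) t = (s * e t) ^ k / k.factorial := by
  induction k with
  | zero => simp [sigWord]
  | succ k ih =>
    intro t ht
    have hsub : Set.Icc a t ⊆ Set.Icc a b := Set.Icc_subset_Icc_right ht.2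
    have hsum : ∀ n, rsSum (fun u => sigWord x a (List.replicate k i₀) u) (fun u => x u i₀) a t n
        = s * rsSum (fun u => (fun w => (s * w) ^ k / k.factorial) (e u)) e a t n := by
      intro n
      rw [rsSum_congr ht.1 (fun u hu => ih u (hsub hu)) (fun u hu => hx u (hsub hu)),
        rsSum_eq_sum_gridPt, rsSum_eq_sum_gridPt, mul_sum]
      exact sum_congr rfl fun i _ => by ring
    have hlim := (tendsto_rsSum_comp_self ht.1 (he.mono hsub) (hec.mono hsub)
      (by fun_prop : ContinuousOn (fun w => (s * w) ^ k / k.factorial) _)).const_mul s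
    rw [List.replicate_succ, sigWord, rsInt, (hlim.congr fun n => (hsum n).symm).limUnder_eq, he₀]
    simp only [mul_pow, intervalIntegral.integral_div, intervalIntegral.integral_const_mul,
      integral_pow, Nat.factorial_succ, Nat.cast_mul, Nat.cast_succ]
    field_simp
    ring

lemma sigWord_cons_replicate (hab : a ≤ b) {x : ℝ → Vec d} {i₀ : Fin d} {e : ℝ → ℝ} {c s : ℝ}
    (he : MonotoneOn e (Set.Icc a b)) (hec : ContinuousOn e (Set.Icc a b)) (he₀ : e a = 0)
    (hx : ∀ u ∈ Set.Icc a b, x u i₀ = c + s * e u) (j : Fin d) (k : ℕ) {J : ℝ}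
    (hJ : Tendsto (rsSumRight (fun u => x u j) (fun u => e u ^ k) a b) atTop (𝓝 J)) :
    sigWord x a (j :: List.replicate k i₀) b =
      s ^ k / k.factorial * (e b ^ k * x b j - e a ^ k * x a j - J) := by
  have hsum : ∀ n ≠ 0, rsSum (fun u => sigWord x a (List.replicate k i₀) u) (fun u => x u j) a b n
      = s ^ k / k.factorial * (e b ^ k * x b j - e a ^ k * x a j -
        rsSumRight (fun u => x u j) (fun u => e u ^ k) a b n) := by
    intro n hn
    have hF : Set.EqOn (fun u => sigWord x a (List.replicate k i₀) u)
        (fun u => s ^ k / k.factorial * e u ^ k) (Set.Icc a b) := fun u hu => by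
      simp only [sigWord_replicate he hec he₀ hx k u hu, mul_pow]; ring
    rw [rsSum_congr hab hF (fun _ _ => rfl), rsSum_eq_sub_rsSumRight _ _ a b hn,
      rsSumRight_const_mul_right]
    ring
  simp only [sigWord, rsInt]
  refine (((tendsto_const_nhds.sub hJ).const_mul _).congr' ?_).limUnder_eq
  filter_upwards [eventually_ne_atTop 0] with n hn
  exact (hsum n hn).symm

/-- Abel summation turns the signature coordinates `∫ (s e)^k / k! dx^j` into the moments
`∫ (x^j - y^j) d(e^k)`. -/
lemma tendsto_rsSumRight_sub_pow_of_sigWord_eq (hab : a ≤ b) {x y : ℝ → Vec d} {i₀ : Fin d}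
    {e : ℝ → ℝ} {c s : ℝ} (hs : s ≠ 0) (hxc : ContinuousOn x (Set.Icc a b))
    (hyc : ContinuousOn y (Set.Icc a b)) (he : MonotoneOn e (Set.Icc a b))
    (hec : ContinuousOn e (Set.Icc a b)) (he₀ : e a = 0)
    (hx : ∀ u ∈ Set.Icc a b, x u i₀ = c + s * e u) (hy : ∀ u ∈ Set.Icc a b, y u i₀ = c + s * e u)
    (hstart : x a = y a) (hword : ∀ w, sigWord x a w b = sigWord y a w b) (j : Fin d) (k : ℕ) :
    Tendsto (rsSumRight (fun u => x u j - y u j) (fun u => e u ^ k) a b) atTop (𝓝 0) := by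
  have hpow : ∀ k : ℕ, MonotoneOn (fun u => e u ^ k) (Set.Icc a b) := fun k u hu v hv huv =>
    pow_le_pow_left₀ (he₀ ▸ he (Set.left_mem_Icc.mpr hab) hu hu.1) (he hu hv huv) k
  have hzero : ∀ z : ℝ → Vec d,
      Tendsto (rsSumRight (fun u => z u j) (fun u => e u ^ 0) a b) atTop (𝓝 0) :=
    fun z => tendsto_const_nhds.congr fun n => by simp [rsSumRight]
  have hend : x b j = y b j := by
    have h := hword (j :: List.replicate 0 i₀)
    rw [sigWord_cons_replicate hab he hec he₀ hx j 0 (hzero x),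
      sigWord_cons_replicate hab he hec he₀ hy j 0 (hzero y), hstart] at h
    simpa using h
  obtain ⟨Jx, hJx⟩ := exists_tendsto_rsSumRight (F := fun u => x u j) hab (by fun_prop) (hpow k)
  obtain ⟨Jy, hJy⟩ := exists_tendsto_rsSumRight (F := fun u => y u j) hab (by fun_prop) (hpow k)
  have hJ : Jx = Jy := by
    have h := hword (j :: List.replicate k i₀)
    rw [sigWord_cons_replicate hab he hec he₀ hx j k hJx,
      sigWord_cons_replicate hab he hec he₀ hy j k hJy, hend, hstart] at h
    have hne : s ^ k / k.factorial ≠ 0 := div_ne_zero (pow_ne_zero k hs) (by positivity)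
    linarith [mul_left_cancel₀ hne h]
  simpa [hJ] using (hJx.sub hJy).congr fun n => (rsSumRight_sub_left _ _ _ a b n).symm

end Signature

lemma exists_eq_add_mul_strictMonoOn {a b : ℝ} {ρ : ℝ → ℝ}
    (hρ : StrictMonoOn ρ (Set.Icc a b) ∨ StrictAntiOn ρ (Set.Icc a b))
    (hρc : ContinuousOn ρ (Set.Icc a b)) :
    ∃ s : ℝ, s ≠ 0 ∧ ∃ e : ℝ → ℝ, StrictMonoOn e (Set.Icc a b) ∧ ContinuousOn e (Set.Icc a b) ∧
      e a = 0 ∧ ∀ t, ρ t = ρ a + s * e t := by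
  rcases hρ with hρ | hρ
  · refine ⟨1, one_ne_zero, fun t => ρ t - ρ a, fun u hu v hv huv => ?_,
      hρc.sub continuousOn_const, sub_self _, fun t => by ring⟩
    simpa using hρ hu hv huv
  · refine ⟨-1, by norm_num, fun t => ρ a - ρ t, fun u hu v hv huv => ?_,
      continuousOn_const.sub hρc, sub_self _, fun t => by ring⟩
    simpa using hρ hu hv huv

theorem signature_injective_monotone_coordinate_general {d : ℕ} (p a b : ℝ)
    (hab : a ≤ b)
    (x y : ℝ → Vec d) (hx : MemCp x p a b) (hy : MemCp y p a b)
    (i0 : Fin d) (ρ : ℝ → ℝ)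
    (hρ : StrictMonoOn ρ (Set.Icc a b) ∨ StrictAntiOn ρ (Set.Icc a b))
    (hxc : ∀ t ∈ Set.Icc a b, x t i0 = ρ t)
    (hyc : ∀ t ∈ Set.Icc a b, y t i0 = ρ t)
    (hstart : x a = y a) :
    signatureT x a b = signatureT y a b ↔ Set.EqOn x y (Set.Icc a b) := by
  refine ⟨fun hsig => ?_, signatureT_eq_of_eqOn hab⟩
  rcases hab.eq_or_lt with rfl | hlt
  · intro t ht
    rwa [le_antisymm ht.2 ht.1]
  have hxcont := hx.1
  have hycont := hy.1
  have hρc : ContinuousOn ρ (Set.Icc a b) :=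
    (show ContinuousOn (fun t => x t i0) _ by fun_prop).congr fun t ht => (hxc t ht).symm
  obtain ⟨s, hs, e, he, hec, he₀, hρe⟩ := exists_eq_add_mul_strictMonoOn hρ hρc
  have hmoments := tendsto_rsSumRight_sub_pow_of_sigWord_eq hab hs hxcont hycont he.monotoneOn hec
    he₀ (fun u hu => (hxc u hu).trans (hρe u)) (fun u hu => (hyc u hu).trans (hρe u)) hstart
    (sigWord_eq_of_signatureT_eq hsig)
  intro t ht
  ext j
  exact sub_eq_zero.mp (eqOn_zero_of_tendsto_rsSumRight_pow hlt (by fun_prop) he (hmoments j) ht)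

/-- Injectivity of the signature for paths with a common strictly
monotone coordinate. If `x, y ∈ C_p([a,b],V)` (`1 ≤ p < 2`) have, in coordinates,
a common strictly monotone coordinate `x^{i₀} = y^{i₀} = ρ`, and `x_a = y_a`, then
`S(x)_{[a,b]} = S(y)_{[a,b]}` iff `x = y` on `[a,b]`. -/
theorem signature_injective_monotone_coordinate {d : ℕ} (p a b : ℝ)
    (hp1 : 1 ≤ p) (hp2 : p < 2) (hab : a ≤ b)
    (x y : ℝ → Vec d) (hx : MemCp x p a b) (hy : MemCp y p a b)
    (i0 : Fin d) (ρ : ℝ → ℝ)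
    (hρ : StrictMonoOn ρ (Set.Icc a b) ∨ StrictAntiOn ρ (Set.Icc a b))
    (hxc : ∀ t ∈ Set.Icc a b, x t i0 = ρ t)
    (hyc : ∀ t ∈ Set.Icc a b, y t i0 = ρ t)
    (hstart : x a = y a) :
    signatureT x a b = signatureT y a b ↔ Set.EqOn x y (Set.Icc a b) :=
  signature_injective_monotone_coordinate_general p a b hab x y hx hy i0 ρ hρ hxc hyc hstart

end
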